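/- For the uniform-sampling strategy on strings of length N with sample size k ≤ N/2, where the estimate of the relative Hamming weight of the unsampled part is the relative Hamming weight of the sampled part, the classical error probability satisfies: for every q ∈ {0,1}^N, Pr_τ(|w(q_τ) - w(q_{-τ})| > δ) ≤ 2 exp(-δ² k N / (N+2)), where τ is a uniformly random subset of {1,…,N} of size k. -/

import Mathlib

/-!
Reveal the sample one position at a time. Removing a uniformly random position from a set `t` of
size `n` leaves a set whose weight takes two values `1/(n-1)` apart and has mean `w(q_t)`, so the
weight `w(q_{-τ})` of the unsampled part is a martingale, and Hoeffding's lemma bounds the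
exponential moment of each step. Since a uniform `(k+1)`-subset is a uniform `k`-subset plus a
uniform new position, the steps compose as in Azuma's inequality: on average over `k`-subsets,
`exp (θ (w(q) - w(q_{-τ}))) ≤ exp (θ² V / 8)` with `V = ∑_{j<k} (N-j-1)⁻²`, and `V ≤ 2k(N+2)/N³`
when `2k ≤ N`. Finally `w(q_τ) - w(q_{-τ}) = (N/k) (w(q) - w(q_{-τ}))`, and a two-sided Chernoff
bound at deviation `δk/N` gives `2 exp (-2(δk/N)²/V) ≤ 2 exp (-δ²kN/(N+2))`.
-/

/-- The relative Hamming weight of a binary string restricted to a set of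
positions: the fraction of ones among the positions in `τ`. -/
noncomputable def relWtOn {N : ℕ} (q : Fin N → Bool) (τ : Finset (Fin N)) : ℝ :=
  ((τ.filter fun l => q l = true).card : ℝ) / τ.card

open Finset Real

open ProbabilityTheory MeasureTheory in
lemma bernoulli_mgf_le {p : ℝ} (hp0 : 0 ≤ p) (hp1 : p ≤ 1) (s : ℝ) :
    p * exp s + (1 - p) ≤ exp (p * s + s ^ 2 / 8) := by
  let μ : Measure ℝ := bernoulliMeasure 1 0 ⟨p, hp0, hp1⟩
  have hIcc : ∀ᵐ x ∂μ, x ∈ Set.Icc (0 : ℝ) 1 := by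
    rw [ae_iff]
    apply bernoulliMeasure_apply_of_notMem_of_notMem _ measurableSet_Icc.compl <;> simp
  have hoeffding : p * exp (s * (1 - p)) + (1 - p) * exp (-(s * p)) ≤ exp (s ^ 2 / 8) := by
    convert (hasSubgaussianMGF_of_mem_Icc aemeasurable_id hIcc).mgf_le s using 1
    · simp [μ, mgf, integral_bernoulliMeasure]
    · norm_num
      ring
  calc p * exp s + (1 - p)
      = (p * exp (s * (1 - p)) + (1 - p) * exp (-(s * p))) * exp (p * s) := by
        rw [add_mul, mul_assoc, mul_assoc, ← exp_add, ← exp_add,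
          show s * (1 - p) + p * s = s by ring, show -(s * p) + p * s = 0 by ring,
          exp_zero, mul_one]
    _ ≤ exp (s ^ 2 / 8) * exp (p * s) := by gcongr
    _ = exp (p * s + s ^ 2 / 8) := by rw [← exp_add, add_comm]

lemma sum_powersetCard_sum_compl_insert {α M : Type*} [Fintype α] [DecidableEq α]
    [AddCommMonoid M] (k : ℕ) (F : Finset α → M) :
    ∑ τ ∈ powersetCard k univ, ∑ i ∈ τᶜ, F (insert i τ)
      = (k + 1) • ∑ σ ∈ powersetCard (k + 1) univ, F σ := by
  calc ∑ τ ∈ powersetCard k univ, ∑ i ∈ τᶜ, F (insert i τ)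
      = ∑ σ ∈ powersetCard (k + 1) (univ : Finset α), ∑ _i ∈ σ, F σ := by
        rw [sum_sigma', sum_sigma']
        refine sum_nbij' (fun p ↦ ⟨insert p.2 p.1, p.2⟩) (fun p ↦ ⟨p.1.erase p.2, p.2⟩)
          ?_ ?_ ?_ ?_ (fun _ _ ↦ rfl) <;> rintro ⟨τ, i⟩ h <;>
          simp only [mem_sigma, mem_powersetCard, mem_compl, subset_univ, true_and] at h ⊢
        · simp [card_insert_of_notMem h.2, h.1]
        · simp [card_erase_of_mem h.2, h.1]
        · simp [erase_insert h.2]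
        · simp [insert_erase h.2]
    _ = _ := by
        rw [smul_sum]
        refine sum_congr rfl fun σ hσ ↦ ?_
        rw [sum_const, (mem_powersetCard.1 hσ).2]

lemma card_filter_lt_le_of_sum_exp_le {ι : Type*} (s : Finset ι) (D : ι → ℝ) {C V a : ℝ}
    (hV : 0 < V) (ha : 0 ≤ a)
    (hmgf : ∀ θ, ∑ x ∈ s, exp (θ * D x) ≤ C * exp (θ ^ 2 * V / 8)) :
    (#{x ∈ s | a < D x} : ℝ) ≤ C * exp (-2 * a ^ 2 / V) := by
  set θ := 4 * a / V with hθ_def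
  have hθ : 0 ≤ θ := by positivity
  have hmarkov : #{x ∈ s | a < D x} * exp (θ * a) ≤ C * exp (θ ^ 2 * V / 8) :=
    calc #{x ∈ s | a < D x} * exp (θ * a) = ∑ x ∈ s with a < D x, exp (θ * a) := by
          rw [sum_const, nsmul_eq_mul]
      _ ≤ ∑ x ∈ s with a < D x, exp (θ * D x) :=
          sum_le_sum fun x hx ↦ exp_le_exp.2 (by gcongr; exact (mem_filter.1 hx).2.le)
      _ ≤ ∑ x ∈ s, exp (θ * D x) :=
          sum_le_sum_of_subset_of_nonneg (filter_subset _ _) fun _ _ _ ↦ (exp_pos _).le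
      _ ≤ C * exp (θ ^ 2 * V / 8) := hmgf θ
  calc (#{x ∈ s | a < D x} : ℝ) ≤ C * exp (θ ^ 2 * V / 8) / exp (θ * a) :=
        (le_div_iff₀ (exp_pos _)).2 hmarkov
    _ = C * exp (-2 * a ^ 2 / V) := by
        rw [mul_div_assoc, ← exp_sub, hθ_def]
        congr 2
        field_simp
        ring

lemma card_filter_lt_abs_le_of_sum_exp_le {ι : Type*} (s : Finset ι) (D : ι → ℝ)
    {C V a : ℝ} (hV : 0 < V) (ha : 0 ≤ a)
    (hmgf : ∀ θ, ∑ x ∈ s, exp (θ * D x) ≤ C * exp (θ ^ 2 * V / 8)) :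
    (#{x ∈ s | a < |D x|} : ℝ) ≤ 2 * C * exp (-2 * a ^ 2 / V) := by
  classical
  have hmgf_neg (θ : ℝ) : ∑ x ∈ s, exp (θ * -D x) ≤ C * exp (θ ^ 2 * V / 8) := by
    simpa [mul_neg, ← neg_mul] using hmgf (-θ)
  have hsub : {x ∈ s | a < |D x|} ⊆ {x ∈ s | a < D x} ∪ {x ∈ s | a < -D x} := by
    intro x hx
    rw [mem_filter, lt_abs] at hx
    rw [mem_union, mem_filter, mem_filter]
    tauto
  calc (#{x ∈ s | a < |D x|} : ℝ) ≤ #{x ∈ s | a < D x} + #{x ∈ s | a < -D x} := by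
        exact_mod_cast (card_le_card hsub).trans (card_union_le _ _)
    _ ≤ C * exp (-2 * a ^ 2 / V) + C * exp (-2 * a ^ 2 / V) :=
        add_le_add (card_filter_lt_le_of_sum_exp_le s D hV ha hmgf)
          (card_filter_lt_le_of_sum_exp_le s (-D ·) hV ha hmgf_neg)
    _ = 2 * C * exp (-2 * a ^ 2 / V) := by ring

lemma one_div_sq_le_mul_sub {M a : ℝ} (hM : 0 < M) (ha : M ≤ a) :
    1 / a ^ 2 ≤ (1 + 1 / M) * (1 / a - 1 / (a + 1)) := by
  have ha0 : 0 < a := hM.trans_le ha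
  have hgap : (1 + 1 / M) * (1 / a - 1 / (a + 1)) - 1 / a ^ 2
      = (a - M) / (M * a ^ 2 * (a + 1)) := by
    field_simp
    ring
  rw [← sub_nonneg, hgap]
  exact div_nonneg (by linarith) (by positivity)

-- The `j`-th term is the squared gap `(1/(N-j-1))²` between the two values that the weight of
-- the unsampled part can take after the `(j+1)`-st draw.
noncomputable def azumaSum (N k : ℕ) : ℝ := ∑ j ∈ range k, 1 / ((N : ℝ) - j - 1) ^ 2

lemma azumaSum_pos {N k : ℕ} (hk : 0 < k) (hkN : k < N) : 0 < azumaSum N k := by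
  refine sum_pos (fun j hj ↦ ?_) (nonempty_range_iff.2 hk.ne')
  have : (j : ℝ) + 1 < N := by exact_mod_cast Nat.lt_of_le_of_lt (mem_range.1 hj) hkN
  exact one_div_pos.2 (pow_pos (by linarith) 2)

lemma azumaSum_le {N k : ℕ} (hk : 0 < k) (hkN : 2 * k ≤ N) :
    azumaSum N k ≤ 2 * k * (N + 2) / N ^ 3 := by
  have hk1 : (1 : ℝ) ≤ k := by exact_mod_cast hk
  have hkN' : (2 : ℝ) * k ≤ N := by exact_mod_cast hkN
  have hN : (0 : ℝ) < N := by linarith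
  set M : ℝ := N - k with hM
  have hM0 : 0 < M := by linarith
  have hterm : ∀ j ∈ range k, 1 / ((N : ℝ) - j - 1) ^ 2
      ≤ (1 + 1 / M) * (1 / ((N : ℝ) - (j + 1 : ℕ)) - 1 / ((N : ℝ) - j)) := by
    intro j hj
    have hj' : (j : ℝ) + 1 ≤ k := by exact_mod_cast mem_range.1 hj
    convert one_div_sq_le_mul_sub hM0 (show M ≤ N - j - 1 by linarith) using 4 <;>
      push_cast <;> ring
  have htelescope : ∑ j ∈ range k, (1 / ((N : ℝ) - (j + 1 : ℕ)) - 1 / ((N : ℝ) - j))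
      = 1 / M - 1 / N := by
    rw [sum_range_sub (fun j : ℕ ↦ 1 / ((N : ℝ) - j))]
    simp [hM]
  calc azumaSum N k
      ≤ ∑ j ∈ range k, (1 + 1 / M) * (1 / ((N : ℝ) - (j + 1 : ℕ)) - 1 / ((N : ℝ) - j)) :=
        sum_le_sum hterm
    _ = k * (M + 1) / (M ^ 2 * N) := by
        rw [← mul_sum, htelescope]
        field_simp
        ring
    _ ≤ 2 * k * (N + 2) / N ^ 3 := by
        rw [div_le_div_iff₀ (by positivity) (by positivity)]
        have h2M : 0 ≤ 2 * M - N := by linarith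
        have key : (M + 1) * N ^ 2 ≤ 2 * M ^ 2 * (N + 2) := by
          nlinarith [mul_nonneg (mul_nonneg hM0.le h2M) (by linarith : (0 : ℝ) ≤ N + 2),
            mul_nonneg hN.le h2M]
        nlinarith [mul_le_mul_of_nonneg_left key (by positivity : (0 : ℝ) ≤ k * N)]

lemma neg_two_mul_sq_div_azumaSum_le {N k : ℕ} (hk : 0 < k) (hkN : 2 * k ≤ N) (δ : ℝ) :
    -2 * (δ * k / N) ^ 2 / azumaSum N k ≤ -(δ ^ 2 * k * N) / (N + 2) := by
  have hN : (0 : ℝ) < N := by exact_mod_cast hk.trans_le (by omega)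
  calc -2 * (δ * k / N) ^ 2 / azumaSum N k = -(2 * (δ * k / N) ^ 2 / azumaSum N k) := by ring
    _ ≤ -(2 * (δ * k / N) ^ 2 / (2 * k * (N + 2) / N ^ 3)) :=
        neg_le_neg (div_le_div_of_nonneg_left (by positivity) (azumaSum_pos hk (by omega))
          (azumaSum_le hk hkN))
    _ = -(δ ^ 2 * k * N) / (N + 2) := by field_simp

section

variable {N : ℕ} (q : Fin N → Bool)

lemma relWtOn_nonneg (τ : Finset (Fin N)) : 0 ≤ relWtOn q τ := by
  unfold relWtOn; positivity

lemma relWtOn_le_one (τ : Finset (Fin N)) : relWtOn q τ ≤ 1 :=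
  div_le_one_of_le₀ (by exact_mod_cast card_filter_le _ _) (Nat.cast_nonneg _)

lemma card_filter_eq_card_mul_relWtOn (t : Finset (Fin N)) :
    (#(t.filter fun l => q l = true) : ℝ) = #t * relWtOn q t := by
  rcases t.eq_empty_or_nonempty with rfl | hne
  · simp
  · rw [relWtOn, mul_div_cancel₀ _ (by positivity)]

lemma relWtOn_erase {t : Finset (Fin N)} {i : Fin N} (hi : i ∈ t) :
    relWtOn q (t.erase i)
      = (#(t.filter fun l => q l = true) - if q i then 1 else 0) / (#t - 1) := by
  have hcard : ((#(t.erase i) : ℕ) : ℝ) = #t - 1 := by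
    rw [card_erase_of_mem hi, Nat.cast_sub (card_pos.2 ⟨i, hi⟩)]; simp
  unfold relWtOn
  rw [filter_erase, hcard]
  split_ifs with hqi
  · rw [card_erase_of_mem (mem_filter.2 ⟨hi, hqi⟩),
      Nat.cast_sub (card_pos.2 ⟨i, mem_filter.2 ⟨hi, hqi⟩⟩)]
    simp
  · rw [erase_eq_self.2 (by simp [hqi])]; simp

lemma sum_ite_eq_card_mul_relWtOn (t : Finset (Fin N)) (a : ℝ) :
    ∑ i ∈ t, (if q i then a else 1) = #t * (relWtOn q t * a + (1 - relWtOn q t)) := by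
  have hsplit := card_filter_add_card_filter_not (s := t) (fun l => q l = true)
  simp only [sum_ite, sum_const, nsmul_eq_mul, mul_one]
  rcases t.eq_empty_or_nonempty with rfl | hne
  · simp
  have : (#t : ℝ) ≠ 0 := by positivity
  unfold relWtOn
  field_simp
  rw [← hsplit]
  push_cast
  ring

lemma sum_exp_relWtOn_erase_le {t : Finset (Fin N)} (ht : 2 ≤ #t) (θ : ℝ) :
    ∑ i ∈ t, exp (-θ * relWtOn q (t.erase i))
      ≤ #t * exp (-θ * relWtOn q t + θ ^ 2 / (8 * (#t - 1) ^ 2)) := by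
  have hn : (2 : ℝ) ≤ #t := by exact_mod_cast ht
  have hn1 : (#t : ℝ) - 1 ≠ 0 := by linarith
  have hterm : ∀ i ∈ t, exp (-θ * relWtOn q (t.erase i))
      = exp (-θ * #t * relWtOn q t / (#t - 1)) * (if q i then exp (θ / (#t - 1)) else 1) := by
    intro i hi
    rw [relWtOn_erase q hi, card_filter_eq_card_mul_relWtOn]
    split_ifs
    · rw [← exp_add]; congr 1; field_simp; ring
    · rw [mul_one]; congr 1; ring
  rw [sum_congr rfl hterm, ← mul_sum, sum_ite_eq_card_mul_relWtOn]
  have hw0 := relWtOn_nonneg q t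
  have hw1 := relWtOn_le_one q t
  clear hterm
  generalize (#t : ℝ) = n at *
  generalize relWtOn q t = w at *
  calc exp (-θ * n * w / (n - 1)) * (n * (w * exp (θ / (n - 1)) + (1 - w)))
      ≤ exp (-θ * n * w / (n - 1)) * (n * exp (w * (θ / (n - 1)) + (θ / (n - 1)) ^ 2 / 8)) := by
        gcongr
        exact bernoulli_mgf_le hw0 hw1 _
    _ = n * exp (-θ * w + θ ^ 2 / (8 * (n - 1) ^ 2)) := by
        rw [mul_left_comm, ← exp_add]
        congr 2
        field_simp
        ring

lemma sum_powersetCard_succ_exp_relWtOn_compl_le (θ : ℝ) {k : ℕ} (hk : k + 1 < N) :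
    ∑ σ ∈ powersetCard (k + 1) univ, exp (-θ * relWtOn q σᶜ)
      ≤ (N - k) / (k + 1) * exp (θ ^ 2 / (8 * (N - k - 1) ^ 2))
          * ∑ τ ∈ powersetCard k univ, exp (-θ * relWtOn q τᶜ) := by
  have hstep : ∀ τ ∈ powersetCard k univ,
      ∑ i ∈ τᶜ, exp (-θ * relWtOn q (insert i τ)ᶜ)
        ≤ (N - k) * exp (θ ^ 2 / (8 * (N - k - 1) ^ 2)) * exp (-θ * relWtOn q τᶜ) := by
    intro τ hτ
    have hcard : #τᶜ = N - k := by
      rw [card_compl, Fintype.card_fin, (mem_powersetCard.1 hτ).2]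
    simp_rw [compl_insert]
    refine (sum_exp_relWtOn_erase_le q (by omega) θ).trans_eq ?_
    rw [hcard, Nat.cast_sub (by omega), mul_assoc, ← exp_add, add_comm]
  have hcount := sum_powersetCard_sum_compl_insert k fun σ ↦ exp (-θ * relWtOn q σᶜ)
  rw [nsmul_eq_mul] at hcount
  push_cast at hcount
  calc ∑ σ ∈ powersetCard (k + 1) univ, exp (-θ * relWtOn q σᶜ)
      = ((k : ℝ) + 1)⁻¹
          * ∑ τ ∈ powersetCard k univ, ∑ i ∈ τᶜ, exp (-θ * relWtOn q (insert i τ)ᶜ) := by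
        rw [hcount, inv_mul_cancel_left₀ (by positivity)]
    _ ≤ ((k : ℝ) + 1)⁻¹ * ∑ τ ∈ powersetCard k univ,
          (N - k) * exp (θ ^ 2 / (8 * (N - k - 1) ^ 2)) * exp (-θ * relWtOn q τᶜ) := by
        gcongr with τ hτ
        exact hstep τ hτ
    _ = _ := by
        rw [← mul_sum]
        ring

lemma sum_exp_relWtOn_compl_le (θ : ℝ) {k : ℕ} (hk : k < N) :
    ∑ τ ∈ powersetCard k univ, exp (-θ * relWtOn q τᶜ)
      ≤ N.choose k * exp (-θ * relWtOn q univ + θ ^ 2 / 8 * azumaSum N k) := by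
  induction k with
  | zero => simp [azumaSum]
  | succ k ih =>
    have hchoose : (N.choose (k + 1) : ℝ) = N.choose k * (N - k) / (k + 1) := by
      rw [eq_div_iff (by positivity), ← Nat.cast_sub (by omega)]
      exact_mod_cast Nat.choose_succ_right_eq N k
    have hexp : exp (-θ * relWtOn q univ + θ ^ 2 / 8 * azumaSum N (k + 1))
        = exp (-θ * relWtOn q univ + θ ^ 2 / 8 * azumaSum N k)
          * exp (θ ^ 2 / (8 * (N - k - 1) ^ 2)) := by
      have hazuma : azumaSum N (k + 1) = azumaSum N k + 1 / ((N : ℝ) - k - 1) ^ 2 :=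
        sum_range_succ _ _
      rw [hazuma, mul_add, mul_one_div, div_div, ← add_assoc, exp_add]
    have hNk : (0 : ℝ) ≤ N - k := by
      have : (k : ℝ) + 1 < N := by exact_mod_cast hk
      linarith
    calc ∑ σ ∈ powersetCard (k + 1) univ, exp (-θ * relWtOn q σᶜ)
        ≤ (N - k) / (k + 1) * exp (θ ^ 2 / (8 * (N - k - 1) ^ 2))
            * ∑ τ ∈ powersetCard k univ, exp (-θ * relWtOn q τᶜ) :=
          sum_powersetCard_succ_exp_relWtOn_compl_le q θ hk
      _ ≤ (N - k) / (k + 1) * exp (θ ^ 2 / (8 * (N - k - 1) ^ 2))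
            * (N.choose k * exp (-θ * relWtOn q univ + θ ^ 2 / 8 * azumaSum N k)) := by
          gcongr
          exact ih (by omega)
      _ = N.choose (k + 1) * exp (-θ * relWtOn q univ + θ ^ 2 / 8 * azumaSum N (k + 1)) := by
          rw [hexp, hchoose]
          ring

lemma sum_exp_mul_relWtOn_sub_compl_le (θ : ℝ) {k : ℕ} (hk : k < N) :
    ∑ τ ∈ powersetCard k univ, exp (θ * (relWtOn q univ - relWtOn q τᶜ))
      ≤ N.choose k * exp (θ ^ 2 * azumaSum N k / 8) := by
  calc ∑ τ ∈ powersetCard k univ, exp (θ * (relWtOn q univ - relWtOn q τᶜ))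
      = exp (θ * relWtOn q univ)
          * ∑ τ ∈ powersetCard k univ, exp (-θ * relWtOn q τᶜ) := by
        rw [mul_sum]
        refine sum_congr rfl fun τ _ ↦ ?_
        rw [← exp_add]
        ring_nf
    _ ≤ exp (θ * relWtOn q univ) *
          (N.choose k * exp (-θ * relWtOn q univ + θ ^ 2 / 8 * azumaSum N k)) := by
        gcongr
        exact sum_exp_relWtOn_compl_le q θ hk
    _ = N.choose k * exp (θ ^ 2 * azumaSum N k / 8) := by
        rw [mul_left_comm, ← exp_add]
        ring_nf

lemma card_filter_lt_abs_relWtOn_sub_compl_le {k : ℕ} (hk : 0 < k) (hkN : k < N)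
    {a : ℝ} (ha : 0 ≤ a) :
    (#{τ ∈ powersetCard k univ | a < |relWtOn q univ - relWtOn q τᶜ|} : ℝ)
      ≤ 2 * N.choose k * exp (-2 * a ^ 2 / azumaSum N k) :=
  card_filter_lt_abs_le_of_sum_exp_le _ _ (azumaSum_pos hk hkN) ha
    fun θ ↦ sum_exp_mul_relWtOn_sub_compl_le q θ hkN

lemma relWtOn_sub_relWtOn_compl {τ : Finset (Fin N)} (hτ : τ.Nonempty) :
    relWtOn q τ - relWtOn q τᶜ = N / #τ * (relWtOn q univ - relWtOn q τᶜ) := by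
  have hones : (#(univ.filter fun l => q l = true) : ℝ)
      = #(τ.filter fun l => q l = true) + #(τᶜ.filter fun l => q l = true) := by
    simp only [card_filter]
    push_cast
    rw [sum_add_sum_compl]
  have hcompl : (#τᶜ : ℝ) = N - #τ := by
    rw [card_compl, Fintype.card_fin,
      Nat.cast_sub (card_le_univ τ |>.trans_eq (Fintype.card_fin N))]
  simp only [card_filter_eq_card_mul_relWtOn, card_univ, Fintype.card_fin, hcompl] at hones
  have : (#τ : ℝ) ≠ 0 := by positivity
  field_simp
  linear_combination -hones

end

/-- Bouman–Fehr classical sampling bound (Serfling-type): for uniform sampling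
of a subset `τ` of size `k ≤ N/2`, for every `q ∈ {0,1}^N`,
`Pr(|w(q_τ) - w(q_{-τ})| > δ) ≤ 2 exp(-δ²kN/(N+2))`. -/
theorem stmt14 (N k : ℕ) (hk : 0 < k) (hkN : 2 * k ≤ N)
    (δ : ℝ) (hδ : 0 < δ) (q : Fin N → Bool) :
    ((Finset.univ.filter fun τ : Finset (Fin N) =>
        τ.card = k ∧ δ < |relWtOn q τ - relWtOn q τᶜ|).card : ℝ)
        / (N.choose k : ℝ)
      ≤ 2 * Real.exp (-(δ ^ 2 * k * N) / (N + 2)) := by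
  have hkN' : k < N := by omega
  have hN : (0 : ℝ) < N := by exact_mod_cast hk.trans hkN'
  have hsub : (univ.filter fun τ : Finset (Fin N) =>
        τ.card = k ∧ δ < |relWtOn q τ - relWtOn q τᶜ|)
      ⊆ {τ ∈ powersetCard k (univ : Finset (Fin N)) |
          δ * k / N < |relWtOn q univ - relWtOn q τᶜ|} := by
    intro τ hτ
    obtain ⟨hcard, hδτ⟩ := (mem_filter.1 hτ).2
    rw [relWtOn_sub_relWtOn_compl q (card_pos.1 (hcard ▸ hk)), hcard, abs_mul,
      abs_of_pos (by positivity), div_mul_eq_mul_div, lt_div_iff₀ (by positivity)] at hδτ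
    refine mem_filter.2 ⟨mem_powersetCard.2 ⟨subset_univ _, hcard⟩, ?_⟩
    rw [div_lt_iff₀ hN]
    linarith
  have hchoose : (0 : ℝ) < N.choose k := by exact_mod_cast Nat.choose_pos hkN'.le
  calc _ ≤ 2 * N.choose k * exp (-2 * (δ * k / N) ^ 2 / azumaSum N k) / N.choose k := by
        gcongr
        exact (Nat.cast_le.2 (card_le_card hsub)).trans
          (card_filter_lt_abs_relWtOn_sub_compl_le q hk hkN' (by positivity))
    _ = 2 * exp (-2 * (δ * k / N) ^ 2 / azumaSum N k) := by field_simp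
    _ ≤ 2 * exp (-(δ ^ 2 * k * N) / (N + 2)) := by
        gcongr 2 * exp ?_
        exact neg_two_mul_sq_div_azumaSum_le hk hkN δ
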